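/- Let uv be a cube edge of CCC_n with u = (x,k), v = (y,k), and let z = (z', m) be any vertex. If the k-th coordinate of z' equals the k-th coordinate of y, then d(z,v) < d(z,u); if it equals the k-th coordinate of x, then d(z,u) < d(z,v). -/

import Mathlib

/-- The cube-connected cycles graph `CCC n`: vertices are pairs of a binary
`n`-string and a cycle digit in `ZMod n`; `(x,k)` and `(y,m)` are adjacent iff
either `x = y` and `m = k ± 1` (cycle edge), or `k = m` and `x, y` differ
exactly in the `k`-th coordinate (cube edge). -/
def CCC (n : ℕ) : SimpleGraph ((Fin n → Bool) × ZMod n) :=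
  SimpleGraph.fromRel (fun p q =>
    (p.1 = q.1 ∧ (q.2 = p.2 + 1 ∨ q.2 = p.2 - 1)) ∨
    (p.2 = q.2 ∧ ∀ i : Fin n, (p.1 i ≠ q.1 i ↔ ((i : ℕ) : ZMod n) = p.2)))

/-!
A walk from `z` to `u = (x, k)` must change coordinate `i` somewhere, and the only edges doing so
are cube edges `(w, k) — (σᵢ w, k)`, where `σᵢ` flips coordinate `i`. Since `σᵢ` is a graph
automorphism, applying it to the part of the walk after that edge gives a walk from `z` to
`σᵢ u = v` that is one step shorter. Applied to a shortest walk (`CCC n` is connected) this gives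
`d(z, v) < d(z, u)`.
-/

lemma ZMod.natCast_finVal_injective (n : ℕ) :
    Function.Injective (fun i : Fin n => ((i : ℕ) : ZMod n)) := by
  intro i j h
  simpa [ZMod.natCast_eq_natCast_iff', Nat.mod_eq_of_lt, Fin.ext_iff] using h

namespace CCC

variable {n : ℕ}

def flipCoord (i : Fin n) (p : (Fin n → Bool) × ZMod n) : (Fin n → Bool) × ZMod n :=
  (Function.update p.1 i (!p.1 i), p.2)

@[simp] lemma flipCoord_snd (i : Fin n) (p : (Fin n → Bool) × ZMod n) :
    (flipCoord i p).2 = p.2 := rfl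

@[simp] lemma flipCoord_flipCoord (i : Fin n) (p : (Fin n → Bool) × ZMod n) :
    flipCoord i (flipCoord i p) = p := by
  ext j
  · by_cases hj : j = i <;> simp [flipCoord, hj]
  · rfl

lemma flipCoord_fst_ne_iff (i j : Fin n) (p : (Fin n → Bool) × ZMod n) :
    p.1 j ≠ (flipCoord i p).1 j ↔ j = i := by
  by_cases hj : j = i <;> simp [flipCoord, hj]

lemma flipCoord_fst_eq_iff (i j : Fin n) (p q : (Fin n → Bool) × ZMod n) :
    (flipCoord i p).1 j = (flipCoord i q).1 j ↔ p.1 j = q.1 j := by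
  by_cases hj : j = i <;> simp [flipCoord, hj]

lemma reachable_add_one (w : Fin n → Bool) (a : ZMod n) :
    (CCC n).Reachable (w, a) (w, a + 1) := by
  by_cases h : a + 1 = a -- only when `n = 1`, where the cycle is a single vertex
  · rw [h]
  · refine SimpleGraph.Adj.reachable ?_
    rw [CCC, SimpleGraph.fromRel_adj]
    exact ⟨by simpa [eq_comm] using h, .inl (.inl ⟨rfl, .inl rfl⟩)⟩

lemma reachable_along_cycle (w : Fin n → Bool) (a b : ZMod n) :
    (CCC n).Reachable (w, a) (w, b) := by
  suffices h : ∀ t : ℤ, (CCC n).Reachable (w, a) (w, a + t) by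
    simpa using h (ZMod.cast (b - a))
  intro t
  induction t using Int.induction_on with
  | zero => simp
  | succ t ih =>
    convert ih.trans (reachable_add_one w _) using 2
    push_cast; ring
  | pred t ih =>
    refine ih.trans (SimpleGraph.Reachable.symm ?_)
    convert reachable_add_one w (a + ((-t - 1 : ℤ) : ZMod n)) using 2
    push_cast; ring

lemma adj_flipCoord (w : Fin n → Bool) (i : Fin n) :
    (CCC n).Adj (w, ((i : ℕ) : ZMod n)) (flipCoord i (w, (i : ℕ))) := by
  rw [CCC, SimpleGraph.fromRel_adj]
  refine ⟨fun h => ?_, .inl (.inr ⟨rfl, fun j => ?_⟩)⟩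
  · exact (flipCoord_fst_ne_iff i i (w, i)).2 rfl (by rw [← h])
  · rw [flipCoord_fst_ne_iff]
    exact (ZMod.natCast_finVal_injective n).eq_iff.symm

lemma reachable_flipCoord (i : Fin n) (p : (Fin n → Bool) × ZMod n) :
    (CCC n).Reachable p (flipCoord i p) :=
  (reachable_along_cycle p.1 p.2 i).trans <| (adj_flipCoord p.1 i).reachable.trans <|
    reachable_along_cycle _ _ p.2

theorem connected : (CCC n).Connected := by
  refine ⟨fun p q => ?_⟩
  suffices h : ∀ (s : Finset (Fin n)) (w : Fin n → Bool), (∀ j ∉ s, w j = q.1 j) →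
      (CCC n).Reachable (w, q.2) q by
    exact (reachable_along_cycle p.1 p.2 q.2).trans (h Finset.univ p.1 (by simp))
  intro s
  induction s using Finset.induction_on with
  | empty =>
    intro w hw
    obtain rfl : w = q.1 := funext fun j => hw j (Finset.notMem_empty j)
    rfl
  | insert i s _ ih =>
    intro w hw
    by_cases hwi : w i = q.1 i
    · refine ih w fun j hj => ?_
      by_cases hji : j = i
      · exact hji ▸ hwi
      · exact hw j (by simp [hji, hj])
    · refine (reachable_flipCoord i (w, q.2)).trans (ih _ fun j hj => ?_)
      by_cases hji : j = i
      · subst hji; simpa [flipCoord, Bool.eq_not_iff] using hwi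
      · simpa [flipCoord, hji] using hw j (by simp [hji, hj])

lemma Adj.flipCoord {p q : (Fin n → Bool) × ZMod n} (i : Fin n) (h : (CCC n).Adj p q) :
    (CCC n).Adj (flipCoord i p) (flipCoord i q) := by
  rw [CCC, SimpleGraph.fromRel_adj] at h ⊢
  refine ⟨Function.Involutive.injective (flipCoord_flipCoord i) |>.ne h.1, h.2.imp ?_ ?_⟩ <;>
  · rintro (⟨h1, h2⟩ | ⟨h1, h2⟩)
    · exact .inl ⟨by ext j; simp [flipCoord_fst_eq_iff, h1], h2⟩
    · exact .inr ⟨h1, fun j => by simpa [flipCoord_fst_eq_iff] using h2 j⟩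

@[simps]
def flipCoordHom (i : Fin n) : CCC n →g CCC n where
  toFun := flipCoord i
  map_rel' := Adj.flipCoord i

lemma flipCoord_eq_of_fst_ne_iff {x y : Fin n → Bool} {i : Fin n} (h : ∀ j, x j ≠ y j ↔ j = i)
    (a : ZMod n) : flipCoord i (x, a) = (y, a) := by
  refine Prod.ext (funext fun j => ?_) rfl
  by_cases hji : j = i
  · subst hji; simpa [flipCoord, Bool.eq_not_iff, eq_comm] using (h j).2 rfl
  · simpa [flipCoord, hji] using mt (h j).1 hji

lemma eq_flipCoord_of_adj {p q : (Fin n → Bool) × ZMod n} {i : Fin n} (h : (CCC n).Adj p q)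
    (hi : p.1 i ≠ q.1 i) : q = flipCoord i p := by
  rw [CCC, SimpleGraph.fromRel_adj] at h
  obtain ⟨hpq, hdiff⟩ : p.2 = q.2 ∧ ∀ j, p.1 j ≠ q.1 j ↔ ((j : ℕ) : ZMod n) = p.2 := by
    rcases h.2 with (⟨h1, -⟩ | hcube) | (⟨h1, -⟩ | ⟨h1, h2⟩)
    · exact absurd (congrFun h1 i) hi
    · exact hcube
    · exact absurd (congrFun h1 i).symm hi
    · exact ⟨h1.symm, fun j => by rw [ne_comm, h2 j, h1]⟩
  have hdiff_iff (j : Fin n) : p.1 j ≠ q.1 j ↔ j = i := by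
    rw [hdiff j, ← (hdiff i).1 hi]
    exact (ZMod.natCast_finVal_injective n).eq_iff
  calc q = (q.1, p.2) := Prod.ext rfl hpq.symm
    _ = flipCoord i p := (flipCoord_eq_of_fst_ne_iff hdiff_iff p.2).symm

lemma exists_walk_flipCoord_length_lt {p u : (Fin n → Bool) × ZMod n} {i : Fin n}
    (W : (CCC n).Walk p u) (hi : p.1 i ≠ u.1 i) :
    ∃ W' : (CCC n).Walk p (flipCoord i u), W'.length < W.length := by
  induction W with
  | nil => exact absurd rfl hi
  | @cons p q u h W ih =>
    by_cases hpq : p.1 i = q.1 i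
    · obtain ⟨W', hW'⟩ := ih (hpq ▸ hi)
      exact ⟨.cons h W', by simpa using hW'⟩
    · obtain rfl := eq_flipCoord_of_adj h hpq
      refine ⟨(W.map (flipCoordHom i)).copy (by simp) (by simp), ?_⟩
      rw [SimpleGraph.Walk.length_copy, SimpleGraph.Walk.length_map,
        SimpleGraph.Walk.length_cons]
      omega

lemma dist_flipCoord_lt {p u : (Fin n → Bool) × ZMod n} {i : Fin n} (hi : p.1 i ≠ u.1 i) :
    (CCC n).dist p (flipCoord i u) < (CCC n).dist p u := by
  obtain ⟨W, hW⟩ := connected.exists_walk_length_eq_dist p u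
  obtain ⟨W', hW'⟩ := exists_walk_flipCoord_length_lt W hi
  exact hW ▸ (SimpleGraph.dist_le W').trans_lt hW'

end CCC

theorem CCC_cube_edge_closer_general (n : ℕ) (x y : Fin n → Bool) (k : ZMod n)
    (hxy : ∀ i : Fin n, x i ≠ y i ↔ ((i : ℕ) : ZMod n) = k)
    (z' : Fin n → Bool) (m : ZMod n) (i : Fin n) (hi : ((i : ℕ) : ZMod n) = k) :
    (z' i = y i → (CCC n).dist (z', m) (y, k) < (CCC n).dist (z', m) (x, k)) ∧
    (z' i = x i → (CCC n).dist (z', m) (x, k) < (CCC n).dist (z', m) (y, k)) := by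
  have hxy' (j : Fin n) : x j ≠ y j ↔ j = i := by
    rw [hxy j, ← hi]
    exact (ZMod.natCast_finVal_injective n).eq_iff
  have hxi : x i ≠ y i := (hxy' i).2 rfl
  have hv : CCC.flipCoord i (x, k) = (y, k) := CCC.flipCoord_eq_of_fst_ne_iff hxy' k
  have hu : CCC.flipCoord i (y, k) = (x, k) :=
    CCC.flipCoord_eq_of_fst_ne_iff (fun j => ne_comm.trans (hxy' j)) k
  constructor
  · intro hz
    exact hv ▸ CCC.dist_flipCoord_lt (show z' i ≠ x i from hz ▸ hxi.symm)
  · intro hz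
    exact hu ▸ CCC.dist_flipCoord_lt (show z' i ≠ y i from hz ▸ hxi)

/-- for a cube edge uv = (x,k)(y,k) of CCC_n and any vertex z = (z',m): if the k-th coordinate of z' agrees with y then z is strictly closer to v = (y,k), and if it agrees with x then z is strictly closer to u = (x,k). -/
theorem CCC_cube_edge_closer (n : ℕ) (hn : 3 ≤ n) (x y : Fin n → Bool) (k : ZMod n)
    (hxy : ∀ i : Fin n, x i ≠ y i ↔ ((i : ℕ) : ZMod n) = k)
    (z' : Fin n → Bool) (m : ZMod n) (i : Fin n) (hi : ((i : ℕ) : ZMod n) = k) :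
    (z' i = y i → (CCC n).dist (z', m) (y, k) < (CCC n).dist (z', m) (x, k)) ∧
    (z' i = x i → (CCC n).dist (z', m) (x, k) < (CCC n).dist (z', m) (y, k)) :=
  CCC_cube_edge_closer_general n x y k hxy z' m i hi
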